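/- Let C be a covering of a finite nonempty set U. For every X ∈ P, the set ⋃_{x ∈ Xᶜ} N(x) is the dual pseudocomplement of X in the lattice (P, ⊆): ⋃_{x ∈ Xᶜ} N(x) ∈ P, X ∪ ⋃_{x ∈ Xᶜ} N(x) = U, and for every Y ∈ P with X ∪ Y = U one has ⋃_{x ∈ Xᶜ} N(x) ⊆ Y. -/

import Mathlib

open Set

variable {U : Type*}

/-- The neighborhood of `x` w.r.t. the covering `C`: the intersection of all
blocks of `C` containing `x`. -/
def nbhd (C : Set (Set U)) (x : U) : Set U := ⋂₀ {K | K ∈ C ∧ x ∈ K}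

/-- The sixth-type lower approximation. -/
def xL (C : Set (Set U)) (X : Set U) : Set U := {x | nbhd C x ⊆ X}

/-- The fixed point set of neighborhoods. -/
def pFix (C : Set (Set U)) : Set (Set U) := {X | xL C X = X}

/-! Since `y ∈ N(x)` is a preorder on `U`, the members of `P` are exactly its up-sets, and
`⋃_{x ∈ S} N(x)` is the up-set generated by `S`, i.e. the least member of `P` containing `S`;
and `X ∪ Y = U` just says `Xᶜ ⊆ Y`. -/

section Neighborhoods

variable (C : Set (Set U))

theorem mem_nbhd_self (x : U) : x ∈ nbhd C x :=
  mem_sInter.2 fun _ hK => hK.2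

variable {C}

theorem nbhd_subset_of_mem {x y : U} (hy : y ∈ nbhd C x) : nbhd C y ⊆ nbhd C x :=
  fun _ hz => mem_sInter.2 fun K hK => mem_sInter.1 hz K ⟨hK.1, mem_sInter.1 hy K hK⟩

theorem mem_pFix_iff {X : Set U} : X ∈ pFix C ↔ ∀ x ∈ X, nbhd C x ⊆ X := by
  refine ⟨fun hX x hx => ?_, fun h => Subset.antisymm (fun x hx => hx (mem_nbhd_self C x)) h⟩
  rw [← hX] at hx
  exact hx

theorem subset_biUnion_nbhd (S : Set U) : S ⊆ ⋃ x ∈ S, nbhd C x :=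
  fun x hx => mem_biUnion hx (mem_nbhd_self C x)

theorem biUnion_nbhd_mem_pFix (S : Set U) : (⋃ x ∈ S, nbhd C x) ∈ pFix C := by
  refine mem_pFix_iff.2 fun z hz => ?_
  obtain ⟨x, hx, hzx⟩ := mem_iUnion₂.1 hz
  exact (nbhd_subset_of_mem hzx).trans (subset_biUnion_of_mem hx)

theorem biUnion_nbhd_subset {S Y : Set U} (hY : Y ∈ pFix C) (hSY : S ⊆ Y) :
    (⋃ x ∈ S, nbhd C x) ⊆ Y :=
  iUnion₂_subset fun x hx => mem_pFix_iff.1 hY x (hSY hx)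

end Neighborhoods

theorem stmt6_general (C : Set (Set U))
    (X : Set U) :
    (⋃ x ∈ Xᶜ, nbhd C x) ∈ pFix C ∧ X ∪ (⋃ x ∈ Xᶜ, nbhd C x) = Set.univ ∧
    ∀ Y ∈ pFix C, X ∪ Y = Set.univ → (⋃ x ∈ Xᶜ, nbhd C x) ⊆ Y :=
  ⟨biUnion_nbhd_mem_pFix Xᶜ,
    compl_subset_iff_union.1 (subset_biUnion_nbhd Xᶜ),
    fun _ hY hXY => biUnion_nbhd_subset hY (compl_subset_iff_union.2 hXY)⟩

/-- for every `X ∈ P`, `⋃_{x ∈ Xᶜ} N(x)` is the dual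
pseudocomplement of `X` in the lattice `(P, ⊆)`. -/
theorem stmt6 [Fintype U] [Nonempty U] (C : Set (Set U))
    (hne : ∀ K ∈ C, K.Nonempty) (hcov : ⋃₀ C = Set.univ)
    (X : Set U) (hX : X ∈ pFix C) :
    (⋃ x ∈ Xᶜ, nbhd C x) ∈ pFix C ∧ X ∪ (⋃ x ∈ Xᶜ, nbhd C x) = Set.univ ∧
    ∀ Y ∈ pFix C, X ∪ Y = Set.univ → (⋃ x ∈ Xᶜ, nbhd C x) ⊆ Y :=
  stmt6_general C X
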